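/- arXiv:2112.13563 — 2 statements merged into one kernel-verified Lean document; each statement's English description precedes it below -/
import Mathlib

section
/- Let M_a be the Hilbert space of real sequences with ⟨x,y⟩ = Σᵢ aᵢ² xᵢ yᵢ (aᵢ > 0, Σ aᵢ² < ∞). Let E ⊆ M_a be bounded with at least two elements and p ∈ E. If i ∈ Λ(GS²(E,p)) and p′ ∈ GS(E,p), then p′ + α eᵢ ∈ GS²(E,p) for every α ∈ ℝ. -/
open scoped InnerProductSpace
open Filter

/-- The first-order generalized linear span of `E` with respect to `p`. -/
def GS {H : Type*} [NormedAddCommGroup H] [InnerProductSpace ℝ H]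
    (E : Set H) (p : H) : Set H :=
  {u : H | ∃ (x : ℕ → H) (α : ℕ → ℝ), (∀ n, x n ∈ E) ∧
    Tendsto (fun n => ∑ k ∈ Finset.range n, α k • (x k - p)) atTop (nhds (u - p))}

/-- The second-order generalized linear span `GS²(E,p) = GS(GS(E,p) ∩ B_r(p), p)`. -/
def GS2 {H : Type*} [NormedAddCommGroup H] [InnerProductSpace ℝ H]
    (E : Set H) (p : H) (r : ℝ) : Set H :=
  GS (GS E p ∩ Metric.ball p r) p

/-- The index set `Λ(E)` of a set `E` with respect to the vectors `e i`. -/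
def Lam {H : Type*} [NormedAddCommGroup H] [InnerProductSpace ℝ H]
    (e : ℕ → H) (E : Set H) : Set ℕ :=
  {i | ∃ x ∈ E, ∃ α : ℝ, α ≠ 0 ∧ x + α • e i ∈ E}

/-- A sequence converges if its even and odd subsequences converge to the same limit. -/
theorem tendsto_even_odd' {β : Type*} [TopologicalSpace β] {f : ℕ → β} {L : β}
    (h1 : Tendsto (fun n => f (2 * n)) atTop (nhds L))
    (h2 : Tendsto (fun n => f (2 * n + 1)) atTop (nhds L)) :
    Tendsto f atTop (nhds L) := by
  rw [Filter.tendsto_def] at h1 h2 ⊢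
  intro U hU
  obtain ⟨N1, hN1⟩ := Filter.mem_atTop_sets.1 (h1 U hU)
  obtain ⟨N2, hN2⟩ := Filter.mem_atTop_sets.1 (h2 U hU)
  refine Filter.mem_atTop_sets.2 ⟨2 * (N1 + N2) + 2, fun n hn => ?_⟩
  rcases Nat.even_or_odd n with ⟨k, hk⟩ | ⟨k, hk⟩
  · have h : f (2 * k) ∈ U := hN1 k (by omega)
    have hk2 : n = 2 * k := by omega
    rwa [hk2]
  · have h : f (2 * k + 1) ∈ U := hN2 k (by omega)
    have hk2 : n = 2 * k + 1 := by omega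
    rwa [hk2]

/-- Any member of `F` belongs to `GS F p`. -/
theorem mem_GS_self {H : Type*} [NormedAddCommGroup H] [InnerProductSpace ℝ H]
    {F : Set H} {p x : H} (hx : x ∈ F) : x ∈ GS F p := by
  refine ⟨fun _ => x, fun k => if k = 0 then 1 else 0, fun _ => hx, ?_⟩
  refine Tendsto.congr' ?_ (tendsto_const_nhds (x := x - p))
  filter_upwards [eventually_ge_atTop 1] with n hn
  rw [Finset.sum_eq_single_of_mem 0 (Finset.mem_range.2 (by omega))]
  · simp
  · intro b _ hb; simp [hb]

/-- `GS F p - p` is closed under scalar multiplication. -/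
theorem GS_smul {H : Type*} [NormedAddCommGroup H] [InnerProductSpace ℝ H]
    {F : Set H} {p u : H} (h : u ∈ GS F p) (c : ℝ) : p + c • (u - p) ∈ GS F p := by
  obtain ⟨x, α, hx, ht⟩ := h
  refine ⟨x, fun k => c * α k, hx, ?_⟩
  rw [add_sub_cancel_left]
  have := ht.const_smul c
  simpa [Finset.smul_sum, mul_smul] using this

/-- `GS F p - p` is closed under addition. -/
theorem GS_add {H : Type*} [NormedAddCommGroup H] [InnerProductSpace ℝ H]
    {F : Set H} {p u v : H} (hu : u ∈ GS F p) (hv : v ∈ GS F p) :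
    p + ((u - p) + (v - p)) ∈ GS F p := by
  obtain ⟨x, α, hx, htx⟩ := hu
  obtain ⟨y, β, hy, hty⟩ := hv
  refine ⟨fun n => if n % 2 = 0 then x (n / 2) else y (n / 2),
          fun n => if n % 2 = 0 then α (n / 2) else β (n / 2),
          fun n => by dsimp only; split <;> [exact hx _; exact hy _], ?_⟩
  rw [add_sub_cancel_left]
  set f := fun n => ∑ k ∈ Finset.range n,
      (if k % 2 = 0 then α (k / 2) else β (k / 2)) •
        ((if k % 2 = 0 then x (k / 2) else y (k / 2)) - p) with hf
  have heven : ∀ n, f (2 * n) =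
      (∑ k ∈ Finset.range n, α k • (x k - p)) + ∑ k ∈ Finset.range n, β k • (y k - p) := by
    intro n
    induction n with
    | zero => simp [hf]
    | succ n ih =>
      have h2 : 2 * (n + 1) = (2 * n + 1) + 1 := by ring
      have e1 : (2 * n) % 2 = 0 := by omega
      have e2 : (2 * n) / 2 = n := by omega
      have e3 : (2 * n + 1) % 2 = 1 := by omega
      have e4 : (2 * n + 1) / 2 = n := by omega
      rw [h2]
      simp only [hf, Finset.sum_range_succ] at ih ⊢
      rw [ih]
      simp only [e1, e2, e3, e4]
      norm_num
      abel
  have hodd : ∀ n, f (2 * n + 1) =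
      (∑ k ∈ Finset.range (n + 1), α k • (x k - p)) + ∑ k ∈ Finset.range n, β k • (y k - p) := by
    intro n
    have e1 : (2 * n) % 2 = 0 := by omega
    have e2 : (2 * n) / 2 = n := by omega
    simp only [hf, Finset.sum_range_succ]
    have hh := heven n
    simp only [hf] at hh
    rw [hh]
    simp only [e1, e2, if_pos rfl]
    abel
  refine tendsto_even_odd' ?_ ?_
  · simpa only [heven] using htx.add hty
  · have h1 : Tendsto (fun n => ∑ k ∈ Finset.range (n + 1), α k • (x k - p)) atTop
        (nhds (u - p)) := htx.comp (tendsto_add_atTop_nat 1)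
    simpa only [hodd] using h1.add hty

/-- in `M_a`, for bounded `E` with at least two elements and `p ∈ E`,
if `i ∈ Λ(GS²(E,p))` and `p' ∈ GS(E,p)`, then `p' + α • eᵢ ∈ GS²(E,p)` for all `α`. -/
theorem stmt13 {H : Type*} [NormedAddCommGroup H] [InnerProductSpace ℝ H] [CompleteSpace H]
    (a : ℕ → ℝ) (ha : ∀ i, 0 < a i) (hsum : Summable fun i => (a i) ^ 2)
    (e : ℕ → H) (he : Orthonormal ℝ (fun i => (a i)⁻¹ • e i))
    (hcomp : (Submodule.span ℝ (Set.range e)).topologicalClosure = ⊤)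
    (E : Set H) (hE : Bornology.IsBounded E) (hE2 : ∃ x ∈ E, ∃ y ∈ E, x ≠ y)
    (p : H) (hp : p ∈ E)
    (r : ℝ) (hr : 0 < r) (hEr : E ⊆ Metric.ball p r) :
    ∀ i ∈ Lam e (GS2 E p r), ∀ p' ∈ GS E p, ∀ α : ℝ, p' + α • e i ∈ GS2 E p r := by
  intro i hi p' hp' α
  obtain ⟨x, hx, α₀, hα₀, hx'⟩ := hi
  have hxF : x ∈ GS (GS E p ∩ Metric.ball p r) p := hx
  have hx'F : x + α₀ • e i ∈ GS (GS E p ∩ Metric.ball p r) p := hx'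
  have hp'F : p' ∈ GS (GS E p ∩ Metric.ball p r) p := by
    obtain ⟨z, γ, hz, ht⟩ := hp'
    exact ⟨z, γ, fun n => ⟨mem_GS_self (hz n), hEr (hz n)⟩, ht⟩
  have h1 : p + (-1 : ℝ) • (x - p) ∈ GS (GS E p ∩ Metric.ball p r) p := GS_smul hxF (-1)
  have h2 := GS_add hx'F h1
  have heq : p + ((x + α₀ • e i - p) + (p + (-1 : ℝ) • (x - p) - p)) = p + α₀ • e i := by
    module
  rw [heq] at h2
  have h3 := GS_smul h2 (α / α₀)
  have heq2 : p + (α / α₀) • (p + α₀ • e i - p) = p + α • e i := by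
    rw [add_sub_cancel_left, smul_smul, div_mul_cancel₀ α hα₀]
  rw [heq2] at h3
  have h4 := GS_add hp'F h3
  have heq3 : p + ((p' - p) + (p + α • e i - p)) = p' + α • e i := by module
  rw [heq3] at h4
  exact h4
end

section
/- Let M_a be the Hilbert space of real sequences with ⟨x,y⟩ = Σᵢ aᵢ² xᵢ yᵢ (aᵢ > 0, Σ aᵢ² < ∞). Let E ⊆ M_a be bounded with at least two elements, p ∈ E, and let J ⊆ M_a be a translated basic cylinder or basic interval (a product set whose i-th factor is a nondegenerate interval for i in a set Λ(J) and a singleton {pᵢ′} otherwise) such that (i) there exists p′ ∈ J ∩ E, and (ii) Λ(J) ⊆ Λ(GS²(E,p)). Then J ⊆ GS(J,p′) ⊆ GS²(E,p). -/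
open scoped InnerProductSpace
open Filter

set_option linter.unusedSectionVars false

section PathAux
variable {H : Type*} [NormedAddCommGroup H] [NormedSpace ℝ H]

/-- Partial sums of a sequence. -/
def pSums (t : ℕ → H) (n : ℕ) : H := ∑ k ∈ Finset.range n, t k

lemma pSums_zero (t : ℕ → H) : pSums t 0 = 0 := by simp [pSums]

lemma pSums_succ (t : ℕ → H) (n : ℕ) : pSums t (n + 1) = pSums t n + t n := by
  simp [pSums, Finset.sum_range_succ]

/-- `w` is reachable by a series with steps in `T`. -/
def IsPath (T : Set H) (w : H) : Prop :=
  ∃ t : ℕ → H, (∀ n, t n ∈ T) ∧ Tendsto (pSums t) atTop (nhds w)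

variable {T : Set H}

lemma isPath_zero (h0 : (0 : H) ∈ T) : IsPath T 0 :=
  ⟨fun _ => 0, fun _ => h0, by
    have : pSums (fun _ : ℕ => (0 : H)) = fun _ => 0 := by
      funext n; simp [pSums]
    rw [this]; exact tendsto_const_nhds⟩

lemma isPath_mem (h0 : (0 : H) ∈ T) {v : H} (hv : v ∈ T) : IsPath T v := by
  refine ⟨fun n => if n = 0 then v else 0, fun n => by by_cases h : n = 0 <;> simp [h, hv, h0], ?_⟩
  have h1 : ∀ n ≥ 1, pSums (fun n => if n = 0 then v else (0:H)) n = v := by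
    intro n hn
    induction n with
    | zero => omega
    | succ m ih =>
      rcases Nat.eq_or_lt_of_le hn with h | h
      · simp [pSums_succ, ← h, pSums_zero]
      · have hm : ¬(m = 0) := by omega
        rw [pSums_succ, ih (by omega)]; simp [hm]
  exact tendsto_const_nhds.congr' (by filter_upwards [eventually_ge_atTop 1] with n hn; exact (h1 n hn).symm)

lemma IsPath.smul (hs : ∀ (c : ℝ), ∀ v ∈ T, c • v ∈ T) {w : H} (h : IsPath T w) (c : ℝ) :
    IsPath T (c • w) := by
  obtain ⟨t, ht, htend⟩ := h
  refine ⟨fun n => c • t n, fun n => hs c _ (ht n), ?_⟩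
  have : (pSums fun n => c • t n) = fun n => c • pSums t n := by
    funext n; simp [pSums, Finset.smul_sum]
  rw [this]
  exact htend.const_smul c

lemma IsPath.add {w1 w2 : H} (h1 : IsPath T w1) (h2 : IsPath T w2) : IsPath T (w1 + w2) := by
  obtain ⟨t1, ht1, he1⟩ := h1
  obtain ⟨t2, ht2, he2⟩ := h2
  refine ⟨fun n => if n % 2 = 0 then t1 (n / 2) else t2 (n / 2),
    fun n => by by_cases h : n % 2 = 0 <;> simp [h, ht1, ht2], ?_⟩
  have key : ∀ n, pSums (fun n => if n % 2 = 0 then t1 (n / 2) else t2 (n / 2)) n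
      = pSums t1 ((n + 1) / 2) + pSums t2 (n / 2) := by
    intro n
    induction n with
    | zero => simp [pSums_zero]
    | succ m ih =>
      rw [pSums_succ, ih]
      by_cases h : m % 2 = 0
      · have h1' : (m + 1 + 1) / 2 = m / 2 + 1 := by omega
        have h2' : (m + 1) / 2 = m / 2 := by omega
        simp only [h, if_pos]
        rw [h1', h2', pSums_succ]
        abel
      · have h1' : (m + 1 + 1) / 2 = (m + 1) / 2 := by omega
        have h2' : (m + 1) / 2 = m / 2 + 1 := by omega
        simp only [h, if_neg, if_false]
        rw [h1', h2', pSums_succ, pSums_succ]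
        abel
  have d1 : Tendsto (fun n : ℕ => (n + 1) / 2) atTop atTop :=
    tendsto_atTop_atTop.mpr fun b => ⟨2 * b, fun a ha => by omega⟩
  have d2 : Tendsto (fun n : ℕ => n / 2) atTop atTop :=
    tendsto_atTop_atTop.mpr fun b => ⟨2 * b, fun a ha => by omega⟩
  exact ((he1.comp d1).add (he2.comp d2)).congr (fun n => (key n).symm)

lemma IsPath.sub (hs : ∀ (c : ℝ), ∀ v ∈ T, c • v ∈ T) {w1 w2 : H}
    (h1 : IsPath T w1) (h2 : IsPath T w2) : IsPath T (w1 - w2) := by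
  have := h1.add (h2.smul hs (-1))
  simpa [sub_eq_add_neg] using this

lemma periodic_pSums (t : ℕ → H) (m0 : ℕ) (hm0 : 0 < m0) :
    ∀ q, ∀ r ≤ m0, pSums (fun k => t (k % m0)) (q * m0 + r)
      = q • pSums t m0 + pSums t r := by
  intro q
  induction q with
  | zero =>
    intro r hr
    induction r with
    | zero => simp [pSums_zero]
    | succ s ih =>
      have hs : s < m0 := by omega
      rw [show 0 * m0 + (s+1) = (0 * m0 + s) + 1 by ring, pSums_succ, ih (by omega)]
      simp [pSums_succ, Nat.mod_eq_of_lt hs]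
  | succ q ihq =>
    intro r hr
    induction r with
    | zero =>
      rw [show (q+1) * m0 + 0 = q * m0 + m0 by ring, ihq m0 le_rfl]
      rw [succ_nsmul, pSums_zero]
      abel
    | succ s ih =>
      have hs : s < m0 := by omega
      rw [show (q+1) * m0 + (s+1) = ((q+1) * m0 + s) + 1 by ring, pSums_succ, ih (by omega)]
      have : ((q+1) * m0 + s) % m0 = s := by
        rw [Nat.add_comm, Nat.add_mul_mod_self_right, Nat.mod_eq_of_lt hs]
      rw [this, pSums_succ]
      abel

/-- Block approximation: any reachable `w` is approximable by a finite path whose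
partial sums all stay within `‖w‖ + ε`. -/
lemma exists_block (hs : ∀ (c : ℝ), ∀ v ∈ T, c • v ∈ T) {w : H} (hw : IsPath T w)
    {ε : ℝ} (hε : 0 < ε) :
    ∃ (len : ℕ) (ts : ℕ → H), 0 < len ∧ (∀ k, ts k ∈ T) ∧
      ‖pSums ts len - w‖ < ε ∧ ∀ n ≤ len, ‖pSums ts n‖ ≤ ‖w‖ + ε := by
  obtain ⟨t, ht, htend⟩ := hw
  -- bound on partial sums
  obtain ⟨M, hM⟩ := htend.norm.isBoundedUnder_le.bddAbove_range
  simp only [mem_upperBounds, Set.mem_range, forall_exists_index] at hM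
  have hMn : ∀ n, ‖pSums t n‖ ≤ M := fun n => hM _ n rfl
  have hM0 : 0 ≤ M := le_trans (norm_nonneg _) (hMn 0)
  -- choose m0 ≥ 1 with ‖P m0 - w‖ < ε/2
  obtain ⟨m1, hm1⟩ := Metric.tendsto_atTop.mp htend (ε/2) (by positivity)
  set m0 : ℕ := max m1 1 with hm0def
  have hm0 : 0 < m0 := by omega
  have hPm0 : ‖pSums t m0 - w‖ < ε / 2 := by
    rw [← dist_eq_norm]; exact hm1 m0 (le_max_left _ _)
  have hPm0norm : ‖pSums t m0‖ ≤ ‖w‖ + ε / 2 := by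
    have h := norm_sub_norm_le (pSums t m0) w
    linarith
  -- choose N with M / N < ε/2
  obtain ⟨N, hN1, hNM⟩ : ∃ N : ℕ, 1 ≤ N ∧ M / N < ε / 2 := by
    obtain ⟨N, hN⟩ := exists_nat_gt (max 1 (M / (ε/2)))
    refine ⟨N, by exact_mod_cast le_of_lt (lt_of_le_of_lt (le_max_left _ _) hN), ?_⟩
    have h2 : M / (ε/2) < N := lt_of_le_of_lt (le_max_right _ _) hN
    have hNpos : (0:ℝ) < N := lt_of_le_of_lt (by positivity) hN
    rw [div_lt_iff₀ hNpos]
    rw [div_lt_iff₀ (by positivity)] at h2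
    linarith
  have hNpos : (0:ℝ) < (N:ℝ) := by exact_mod_cast hN1
  -- the block
  refine ⟨N * m0, fun k => (N : ℝ)⁻¹ • t (k % m0), by positivity, fun k => hs _ _ (ht _), ?_, ?_⟩
  · have : pSums (fun k => (N:ℝ)⁻¹ • t (k % m0)) (N * m0)
        = (N:ℝ)⁻¹ • (N • pSums t m0 + pSums t 0) := by
      rw [← periodic_pSums t m0 hm0 N 0 (by omega)]
      simp only [pSums, Finset.smul_sum, Nat.add_zero]
    rw [this, pSums_zero, add_zero, ← Nat.cast_smul_eq_nsmul ℝ, smul_smul,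
      inv_mul_cancel₀ (ne_of_gt hNpos), one_smul]
    exact lt_of_lt_of_le hPm0 (by linarith)
  · intro n hn
    obtain ⟨q, r, hrm0, hqr⟩ : ∃ q r, r ≤ m0 ∧ n = q * m0 + r := by
      refine ⟨n / m0, n % m0, le_of_lt (Nat.mod_lt _ hm0), ?_⟩
      rw [Nat.mul_comm (n / m0) m0]
      exact (Nat.div_add_mod n m0).symm
    have hqN : q ≤ N := by
      by_contra hq
      have h : N * m0 < q * m0 := (Nat.mul_lt_mul_right hm0).mpr (by omega)
      omega
    have : pSums (fun k => (N:ℝ)⁻¹ • t (k % m0)) n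
        = (N:ℝ)⁻¹ • (q • pSums t m0 + pSums t r) := by
      rw [hqr, ← periodic_pSums t m0 hm0 q r hrm0]
      simp only [pSums, Finset.smul_sum]
    rw [this]
    have h1 : ‖(N:ℝ)⁻¹ • (q • pSums t m0 + pSums t r)‖
        ≤ (N:ℝ)⁻¹ * ((q : ℝ) * ‖pSums t m0‖ + M) := by
      rw [norm_smul, norm_inv, Real.norm_natCast]
      apply mul_le_mul_of_nonneg_left _ (by positivity)
      calc ‖q • pSums t m0 + pSums t r‖ ≤ ‖q • pSums t m0‖ + ‖pSums t r‖ := norm_add_le _ _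
        _ ≤ (q:ℝ) * ‖pSums t m0‖ + M := by
            rw [← Nat.cast_smul_eq_nsmul ℝ, norm_smul, Real.norm_natCast]
            exact add_le_add le_rfl (hMn r)
    have h2 : (N:ℝ)⁻¹ * ((q : ℝ) * ‖pSums t m0‖ + M)
        ≤ ‖pSums t m0‖ + M / N := by
      rw [mul_add, div_eq_inv_mul]
      apply add_le_add _ le_rfl
      rw [← mul_assoc]
      have hq' : (N:ℝ)⁻¹ * (q:ℝ) ≤ 1 := by
        rw [inv_mul_le_iff₀ hNpos]
        simpa using (by exact_mod_cast hqN : (q:ℝ) ≤ N)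
      nlinarith [norm_nonneg (pSums t m0)]
    calc ‖(N:ℝ)⁻¹ • (q • pSums t m0 + pSums t r)‖ ≤ ‖pSums t m0‖ + M / N := le_trans h1 h2
      _ ≤ (‖w‖ + ε/2) + ε/2 := add_le_add hPm0norm (le_of_lt hNM)
      _ = ‖w‖ + ε := by ring
lemma isPath_pSums (h0 : (0 : H) ∈ T) {t : ℕ → H} (ht : ∀ k, t k ∈ T) (n : ℕ) :
    IsPath T (pSums t n) := by
  induction n with
  | zero => rw [pSums_zero]; exact isPath_zero h0
  | succ n ih => rw [pSums_succ]; exact ih.add (isPath_mem h0 (ht n))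

lemma isPath_pSums' (h0 : (0 : H) ∈ T) {v : ℕ → H} (hv : ∀ m, IsPath T (v m)) (n : ℕ) :
    IsPath T (pSums v n) := by
  induction n with
  | zero => rw [pSums_zero]; exact isPath_zero h0
  | succ n ih => rw [pSums_succ]; exact ih.add (hv n)

/-- Main closure lemma: the set of path-reachable points is closed under
convergent series. -/
lemma isPath_of_series (h0 : (0 : H) ∈ T) (hs : ∀ (c : ℝ), ∀ v ∈ T, c • v ∈ T)
    {v : ℕ → H} {w : H} (hv : ∀ m, IsPath T (v m))
    (hw : Tendsto (pSums v) atTop (nhds w)) : IsPath T w := by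
  classical
  have half_pos : ∀ m : ℕ, (0:ℝ) < (1/2)^m := fun m => by positivity
  -- a choice function for blocks
  have pickex : ∀ (m : ℕ) (C : H), ∃ (len : ℕ) (ts : ℕ → H), 0 < len ∧ (∀ k, ts k ∈ T) ∧
      (IsPath T (pSums v (m+1) - C) →
        ‖pSums ts len - (pSums v (m+1) - C)‖ < (1/2)^m ∧
        ∀ n ≤ len, ‖pSums ts n‖ ≤ ‖pSums v (m+1) - C‖ + (1/2)^m) := by
    intro m C
    by_cases h : IsPath T (pSums v (m+1) - C)
    · obtain ⟨len, ts, hl, hT, h1, h2⟩ := exists_block hs h (half_pos m)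
      exact ⟨len, ts, hl, hT, fun _ => ⟨h1, h2⟩⟩
    · exact ⟨1, fun _ => 0, one_pos, fun _ => h0, fun hc => absurd hc h⟩
  choose len ts hlen hts hgood using pickex
  -- cumulative block sums
  let B : ℕ → H := fun m => Nat.rec 0 (fun m Bm => Bm + pSums (ts m Bm) (len m Bm)) m
  have hB0 : B 0 = 0 := rfl
  have hBrec : ∀ m, B (m+1) = B m + pSums (ts m (B m)) (len m (B m)) := fun m => rfl
  set L : ℕ → ℕ := fun m => len m (B m) with hLdef
  set τ : ℕ → ℕ → H := fun m => ts m (B m) with hτdef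
  -- invariant
  have hBpath : ∀ m, IsPath T (B m) := by
    intro m
    induction m with
    | zero => rw [hB0]; exact isPath_zero h0
    | succ m ih => rw [hBrec]; exact ih.add (isPath_pSums h0 (hts m (B m)) _)
  have hcond : ∀ m, IsPath T (pSums v (m+1) - B m) := fun m =>
    (isPath_pSums' h0 hv (m+1)).sub hs (hBpath m)
  have herr : ∀ m, ‖pSums (τ m) (L m) - (pSums v (m+1) - B m)‖ < (1/2)^m :=
    fun m => (hgood m (B m) (hcond m)).1
  have hbd : ∀ m, ∀ n ≤ L m, ‖pSums (τ m) n‖ ≤ ‖pSums v (m+1) - B m‖ + (1/2)^m :=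
    fun m => (hgood m (B m) (hcond m)).2
  have hBS : ∀ m, ‖B (m+1) - pSums v (m+1)‖ < (1/2)^m := by
    intro m
    have h : B (m+1) - pSums v (m+1) = pSums (τ m) (L m) - (pSums v (m+1) - B m) := by
      rw [hBrec]; abel
    rw [h]; exact herr m
  -- convergence of B to w
  have hhalf : Tendsto (fun m : ℕ => ((1:ℝ)/2)^m) atTop (nhds 0) :=
    tendsto_pow_atTop_nhds_zero_of_lt_one (by norm_num) (by norm_num)
  have hSshift : Tendsto (fun m => pSums v (m+1)) atTop (nhds w) :=
    hw.comp (tendsto_add_atTop_nat 1)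
  have hB1 : Tendsto (fun m => B (m+1)) atTop (nhds w) := by
    rw [tendsto_iff_norm_sub_tendsto_zero]
    apply squeeze_zero (fun m => norm_nonneg _)
      (g := fun m => (1/2)^m + ‖pSums v (m+1) - w‖)
    · intro m
      calc ‖B (m+1) - w‖ ≤ ‖B (m+1) - pSums v (m+1)‖ + ‖pSums v (m+1) - w‖ :=
            norm_sub_le_norm_sub_add_norm_sub _ _ _
        _ ≤ (1/2)^m + ‖pSums v (m+1) - w‖ := by
            have := hBS m; linarith
    · simpa using hhalf.add (tendsto_iff_norm_sub_tendsto_zero.mp hSshift)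
  have hBtend : Tendsto B atTop (nhds w) := by
    rw [← tendsto_add_atTop_iff_nat 1]; exact hB1
  have hSB : Tendsto (fun m => ‖pSums v (m+1) - B m‖) atTop (nhds 0) := by
    have := (hSshift.sub hBtend).norm
    simpa using this
  -- flattening
  let cum : ℕ → ℕ := fun m => Nat.rec 0 (fun m c => c + L m) m
  have hcum0 : cum 0 = 0 := rfl
  have hcum : ∀ m, cum (m+1) = cum m + L m := fun m => rfl
  have hcumge : ∀ m, m ≤ cum m := by
    intro m
    induction m with
    | zero => omega
    | succ m ih =>
      have hL1 : 0 < L m := hlen m (B m)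
      rw [hcum]; omega
  have hcummono : Monotone cum := monotone_nat_of_le_succ fun m => by
    rw [hcum]; omega
  have hex : ∀ n : ℕ, ∃ m, n < cum (m+1) := fun n => ⟨n, by have := hcumge (n+1); omega⟩
  set idx : ℕ → ℕ := fun n => Nat.find (hex n) with hidxdef
  have hidx1 : ∀ n, n < cum (idx n + 1) := fun n => Nat.find_spec (hex n)
  have hidx2 : ∀ n, cum (idx n) ≤ n := by
    intro n
    rcases Nat.eq_zero_or_pos (idx n) with h | h
    · rw [h, hcum0]; omega
    · have hmin := Nat.find_min (hex n) (show idx n - 1 < idx n by omega)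
      rw [show idx n - 1 + 1 = idx n by omega] at hmin
      omega
  have hidxval : ∀ m j, j < L m → idx (cum m + j) = m := by
    intro m j hj
    rw [hidxdef]
    rw [Nat.find_eq_iff]
    constructor
    · rw [hcum]; omega
    · intro k hk
      have h1 : cum (k+1) ≤ cum m := hcummono (show k + 1 ≤ m by omega)
      omega
  set flat : ℕ → H := fun n => τ (idx n) (n - cum (idx n)) with hflatdef
  have hflatT : ∀ n, flat n ∈ T := fun n => hts _ _ _
  have hflat : ∀ m j, j < L m → flat (cum m + j) = τ m j := by
    intro m j hj
    rw [hflatdef]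
    simp only
    rw [hidxval m j hj, Nat.add_sub_cancel_left]
  have F3 : ∀ m, ∀ j ≤ L m, pSums flat (cum m + j) = B m + pSums (τ m) j := by
    intro m
    induction m with
    | zero =>
      intro j hj
      induction j with
      | zero => rw [hcum0, pSums_zero, hB0]; simp [pSums_zero]
      | succ s ih =>
        rw [show cum 0 + (s+1) = (cum 0 + s) + 1 by omega, pSums_succ, ih (by omega),
          hflat 0 s (by omega), pSums_succ]
        abel
    | succ m ihm =>
      have base : pSums flat (cum (m+1)) = B (m+1) := by
        rw [hcum, ihm (L m) le_rfl, hBrec]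
      intro j hj
      induction j with
      | zero => rw [Nat.add_zero, base, pSums_zero, add_zero]
      | succ s ih =>
        rw [show cum (m+1) + (s+1) = (cum (m+1) + s) + 1 by omega, pSums_succ, ih (by omega),
          hflat (m+1) s (by omega), pSums_succ]
        abel
  -- final convergence
  have hidxT : Tendsto idx atTop atTop := tendsto_atTop_atTop.mpr fun m => ⟨cum m, fun n hn => by
    by_contra hcon
    push_neg at hcon
    have h1 : cum (idx n + 1) ≤ cum m := hcummono (show idx n + 1 ≤ m by omega)
    have h2 := hidx1 n
    omega⟩
  have key : ∀ n, ‖pSums flat n - w‖ ≤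
      ‖B (idx n) - w‖ + (‖pSums v (idx n + 1) - B (idx n)‖ + (1/2)^(idx n)) := by
    intro n
    have h1 : cum (idx n) + (n - cum (idx n)) = n := by have := hidx2 n; omega
    have h2 : n - cum (idx n) ≤ L (idx n) := by
      have := hidx1 n; rw [hcum] at this; omega
    have h3 := F3 (idx n) (n - cum (idx n)) h2
    rw [h1] at h3
    rw [h3, show B (idx n) + pSums (τ (idx n)) (n - cum (idx n)) - w
      = (B (idx n) - w) + pSums (τ (idx n)) (n - cum (idx n)) by abel]
    calc ‖(B (idx n) - w) + pSums (τ (idx n)) (n - cum (idx n))‖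
        ≤ ‖B (idx n) - w‖ + ‖pSums (τ (idx n)) (n - cum (idx n))‖ := norm_add_le _ _
      _ ≤ _ := add_le_add le_rfl (hbd (idx n) _ h2)
  have hg : Tendsto (fun m => ‖B m - w‖ + (‖pSums v (m+1) - B m‖ + (1/2)^m))
      atTop (nhds 0) := by
    have h1 := tendsto_iff_norm_sub_tendsto_zero.mp hBtend
    have := h1.add (hSB.add hhalf)
    simpa using this
  refine ⟨flat, hflatT, ?_⟩
  rw [tendsto_iff_norm_sub_tendsto_zero]
  exact squeeze_zero (fun n => norm_nonneg _) key (hg.comp hidxT)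
/-- The allowed steps for the generalized span construction. -/
def Tset (A : Set H) (p : H) : Set H := {v | ∃ x ∈ A, ∃ α : ℝ, v = α • (x - p)}

lemma Tset_smul (A : Set H) (p : H) : ∀ (c : ℝ), ∀ v ∈ Tset A p, c • v ∈ Tset A p := by
  rintro c v ⟨x, hx, α, rfl⟩
  exact ⟨x, hx, c * α, smul_smul c α _⟩

lemma Tset_zero {A : Set H} {p : H} (hA : A.Nonempty) : (0 : H) ∈ Tset A p := by
  obtain ⟨x, hx⟩ := hA
  exact ⟨x, hx, 0, by simp⟩

end PathAux

section Bridge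
variable {H : Type*} [NormedAddCommGroup H] [InnerProductSpace ℝ H]

lemma mem_GS_iff {A : Set H} {p u : H} : u ∈ GS A p ↔ IsPath (Tset A p) (u - p) := by
  constructor
  · rintro ⟨x, α, hx, htend⟩
    exact ⟨fun n => α n • (x n - p), fun n => ⟨x n, hx n, α n, rfl⟩, htend⟩
  · rintro ⟨t, ht, htend⟩
    choose x hx α hα using ht
    refine ⟨x, α, hx, ?_⟩
    have : (fun n => ∑ k ∈ Finset.range n, α k • (x k - p)) = pSums t := by
      funext n
      exact Finset.sum_congr rfl fun k _ => (hα k).symm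
    rw [this]
    exact htend


end Bridge

/-- in `M_a` (a real Hilbert space with vectors `e i` of norm `a i`,
`{eᵢ/aᵢ}` a complete orthonormal sequence; coordinates given by `⟪x, eᵢ⟫/aᵢ²`), let
`E` be bounded with at least two elements, `p ∈ E`, and let `J` be a translated basic
cylinder or basic interval: a product set whose `i`-th factor is the closed interval
`[lo i, hi i]`, nondegenerate exactly for `i ∈ ΛJ` and a singleton otherwise.  If
(i) there exists `p' ∈ J ∩ E` and (ii) `Λ(J) = ΛJ ⊆ Λ(GS²(E,p))`, then
`J ⊆ GS(J,p') ⊆ GS²(E,p)`. -/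
theorem stmt15 {H : Type*} [NormedAddCommGroup H] [InnerProductSpace ℝ H] [CompleteSpace H]
    (a : ℕ → ℝ) (ha : ∀ i, 0 < a i) (hsum : Summable fun i => (a i) ^ 2)
    (e : ℕ → H) (he : Orthonormal ℝ (fun i => (a i)⁻¹ • e i))
    (hcomp : (Submodule.span ℝ (Set.range e)).topologicalClosure = ⊤)
    (E : Set H) (hE : Bornology.IsBounded E) (hE2 : ∃ x ∈ E, ∃ y ∈ E, x ≠ y)
    (p : H) (hp : p ∈ E)
    (r : ℝ) (hr : 0 < r) (hEr : E ⊆ Metric.ball p r)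
    (J : Set H) (lo hi : ℕ → ℝ) (ΛJ : Set ℕ)
    (hJ : ∀ x : H, x ∈ J ↔ ∀ i,
      lo i ≤ ⟪x, e i⟫_ℝ / (a i) ^ 2 ∧ ⟪x, e i⟫_ℝ / (a i) ^ 2 ≤ hi i)
    (hnd : ∀ i ∈ ΛJ, lo i < hi i) (hdeg : ∀ i ∉ ΛJ, lo i = hi i)
    (p' : H) (hp' : p' ∈ J ∩ E)
    (hsub : ΛJ ⊆ Lam e (GS2 E p r)) :
    J ⊆ GS J p' ∧ GS J p' ⊆ GS2 E p r := by
  obtain ⟨hp'J, hp'E⟩ := hp'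
  have hJne : J.Nonempty := ⟨p', hp'J⟩
  -- Part 1 : J ⊆ GS J p'
  have part1 : J ⊆ GS J p' := by
    intro u hu
    rw [mem_GS_iff]
    exact isPath_mem (Tset_zero hJne) ⟨u, hu, 1, (one_smul _ _).symm⟩
  refine ⟨part1, ?_⟩
  -- Part 2
  set S : Set H := GS E p ∩ Metric.ball p r with hSdef
  set T2 : Set H := Tset S p with hT2def
  have hpGS : p ∈ GS E p := by
    refine ⟨fun _ => p, fun _ => 0, fun _ => hp, ?_⟩
    simpa using tendsto_const_nhds.congr (fun n => by simp)
  have hpS : p ∈ S := ⟨hpGS, Metric.mem_ball_self hr⟩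
  have h0 : (0 : H) ∈ T2 := Tset_zero ⟨p, hpS⟩
  have hs : ∀ (c : ℝ), ∀ v ∈ T2, c • v ∈ T2 := Tset_smul S p
  -- step (a) : every multiple of `e i`, `i ∈ ΛJ`, is reachable
  have stepa : ∀ i ∈ ΛJ, ∀ c : ℝ, IsPath T2 (c • e i) := by
    intro i hi c
    obtain ⟨x, hx, α, hα, hxα⟩ := hsub hi
    rw [GS2, mem_GS_iff] at hx hxα
    have h1 : IsPath T2 (α • e i) := by
      have := hxα.sub hs hx
      simpa using this
    have := h1.smul hs (c / α)
    rwa [smul_smul, div_mul_cancel₀ c hα] at this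
  -- the Hilbert basis
  have hane : ∀ i, a i ≠ 0 := fun i => ne_of_gt (ha i)
  have hspan : Submodule.span ℝ (Set.range fun i => (a i)⁻¹ • e i)
      = Submodule.span ℝ (Set.range e) := by
    apply le_antisymm
    · rw [Submodule.span_le]
      rintro _ ⟨i, rfl⟩
      exact Submodule.smul_mem _ _ (Submodule.subset_span ⟨i, rfl⟩)
    · rw [Submodule.span_le]
      rintro _ ⟨i, rfl⟩
      have : e i = a i • (a i)⁻¹ • e i := by
        rw [smul_smul, mul_inv_cancel₀ (hane i), one_smul]
      rw [this]
      exact Submodule.smul_mem _ _ (Submodule.subset_span ⟨i, rfl⟩)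
  have hsp : ⊤ ≤ (Submodule.span ℝ (Set.range fun i => (a i)⁻¹ • e i)).topologicalClosure := by
    rw [hspan, hcomp]
  let b : HilbertBasis ℕ ℝ H := HilbertBasis.mk he hsp
  have hb : ⇑b = fun i => (a i)⁻¹ • e i := HilbertBasis.coe_mk he hsp
  -- step (b) : x - p' is reachable for x ∈ J
  have stepb : ∀ x ∈ J, IsPath T2 (x - p') := by
    intro x hx
    have hcoord : ∀ i ∉ ΛJ, ⟪x - p', e i⟫_ℝ = 0 := by
      intro i hi
      have h1 := (hJ x).mp hx i
      have h2 := (hJ p').mp hp'J i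
      have hd := hdeg i hi
      have ha2 : (a i)^2 ≠ 0 := pow_ne_zero 2 (hane i)
      have hx1 : ⟪x, e i⟫_ℝ / (a i)^2 = lo i := le_antisymm (hd ▸ h1.2) h1.1
      have hp1 : ⟪p', e i⟫_ℝ / (a i)^2 = lo i := le_antisymm (hd ▸ h2.2) h2.1
      have : ⟪x, e i⟫_ℝ = ⟪p', e i⟫_ℝ := by
        have := hx1.trans hp1.symm
        rw [div_left_inj' ha2] at this
        linarith [this]
      rw [inner_sub_left, this, sub_self]
    have hhsum : HasSum (fun i => b.repr (x - p') i • b i) (x - p') := b.hasSum_repr (x - p')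
    have htend : Tendsto (pSums fun i => b.repr (x - p') i • b i) atTop (nhds (x - p')) :=
      hhsum.tendsto_sum_nat
    apply isPath_of_series h0 hs _ htend
    intro i
    by_cases hi : i ∈ ΛJ
    · have : b.repr (x - p') i • b i = ((b.repr (x - p') i) * (a i)⁻¹) • e i := by
        rw [hb]
        simp [smul_smul]
      rw [this]
      exact stepa i hi _
    · have hz : b.repr (x - p') i = 0 := by
        rw [b.repr_apply_apply, hb]
        simp only [real_inner_smul_left]
        rw [real_inner_comm]
        rw [hcoord i hi]
        ring
      rw [hz, zero_smul]
      exact isPath_zero h0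
  -- step (c)
  have hp'S : p' ∈ S := by
    refine ⟨?_, hEr hp'E⟩
    rw [mem_GS_iff]
    exact isPath_mem (Tset_zero ⟨p, hp⟩) ⟨p', hp'E, 1, (one_smul _ _).symm⟩
  have stepc : IsPath T2 (p' - p) := isPath_mem h0 ⟨p', hp'S, 1, (one_smul _ _).symm⟩
  -- step (d)
  intro u hu
  rw [mem_GS_iff] at hu
  obtain ⟨t, ht, htend⟩ := hu
  have hterm : ∀ n, IsPath T2 (t n) := by
    intro n
    obtain ⟨x, hx, α, hα⟩ := ht n
    rw [hα]
    exact (stepb x hx).smul hs α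
  have hup' : IsPath T2 (u - p') := isPath_of_series h0 hs hterm htend
  have : IsPath T2 (u - p) := by
    have := hup'.add stepc
    simpa using this
  rw [GS2, mem_GS_iff]
  exact this
end
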